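/- Let P_m be the powerset of an m-element domain. Then NCTD(P_m) = ⌈m/2⌉. -/

import Mathlib

/-!
Lower bound: two neighbouring concepts `C` and `C ∆ {x}` can only be told apart by an example
on `x`, so in a non-clashing teacher every edge of the hypercube is charged to an example in the
teaching set of one of its endpoints. The `m 2^(m-1)` edges then force a total teaching-set size of
at least `m 2^m / 2`, i.e. some teaching set of size at least `m / 2`.

Upper bound: split the domain into `⌈m/2⌉` pairs `{a, b}`. On each pair one example suffices:
label it with the membership of `b`, and put it on `a` if the concept agrees on `a` and `b`, on `b`
otherwise. Two concepts that differ on the pair cannot both be consistent with the other's example.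
-/

open Finset

variable {X : Type*} [DecidableEq X]

/-- A sample set `S` is consistent with concept `C`. -/
def Consistent (C : Finset X) (S : Finset (X × Bool)) : Prop :=
  ∀ p ∈ S, (p.1 ∈ C ↔ p.2 = true)

/-- `T` is a teacher mapping for the class `𝒞`. -/
def IsTeacher (𝒞 : Finset (Finset X)) (T : Finset X → Finset (X × Bool)) : Prop :=
  ∀ C ∈ 𝒞, Consistent C (T C)

/-- `T` is non-clashing on `𝒞`. -/
def NonClashing (𝒞 : Finset (Finset X)) (T : Finset X → Finset (X × Bool)) : Prop :=
  ∀ C ∈ 𝒞, ∀ C' ∈ 𝒞, C ≠ C' → ¬ (Consistent C' (T C) ∧ Consistent C (T C'))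

/-- The no-clash teaching dimension. -/
noncomputable def NCTD (𝒞 : Finset (Finset X)) : ℕ :=
  sInf {d | ∃ T : Finset X → Finset (X × Bool),
    IsTeacher 𝒞 T ∧ NonClashing 𝒞 T ∧ ∀ C ∈ 𝒞, (T C).card ≤ d}

/-- `T` is a positive teacher mapping for `𝒞` (positive examples only). -/
def IsPosTeacher (𝒞 : Finset (Finset X)) (T : Finset X → Finset X) : Prop :=
  ∀ C ∈ 𝒞, T C ⊆ C

/-- A positive teacher mapping is non-clashing on `𝒞`. -/
def PosNonClashing (𝒞 : Finset (Finset X)) (T : Finset X → Finset X) : Prop :=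
  ∀ C ∈ 𝒞, ∀ C' ∈ 𝒞, C ≠ C' → ¬ (T C ⊆ C' ∧ T C' ⊆ C)

/-- The positive no-clash teaching dimension. -/
noncomputable def NCTDplus (𝒞 : Finset (Finset X)) : ℕ :=
  sInf {d | ∃ T : Finset X → Finset X,
    IsPosTeacher 𝒞 T ∧ PosNonClashing 𝒞 T ∧ ∀ C ∈ 𝒞, (T C).card ≤ d}

/-- The average no-clash teaching dimension (real-valued). -/
noncomputable def ANCTD (𝒞 : Finset (Finset X)) : ℝ :=
  sInf {q : ℝ | ∃ T : Finset X → Finset (X × Bool),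
    IsTeacher 𝒞 T ∧ NonClashing 𝒞 T ∧
      q = (∑ C ∈ 𝒞, ((T C).card : ℝ)) / 𝒞.card}

/-- The number of neighbors of `C` in `𝒞` (concepts at symmetric difference one). -/
def degIn (𝒞 : Finset (Finset X)) (C : Finset X) : ℕ :=
  (𝒞.filter (fun C' => ((C \ C') ∪ (C' \ C)).card = 1)).card

/-- The average degree of `𝒞`. -/
noncomputable def degAvg (𝒞 : Finset (Finset X)) : ℝ :=
  (∑ C ∈ 𝒞, (degIn 𝒞 C : ℝ)) / 𝒞.card

open scoped symmDiff

lemma card_symmDiff_eq_one_iff {C C' : Finset X} : #(C ∆ C') = 1 ↔ ∃ x, C' = C ∆ {x} := by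
  constructor
  · rintro h
    obtain ⟨x, hx⟩ := card_eq_one.mp h
    exact ⟨x, by rw [← hx, symmDiff_symmDiff_cancel_left]⟩
  · rintro ⟨x, rfl⟩
    rw [symmDiff_symmDiff_cancel_left, card_singleton]

lemma degIn_univ [Fintype X] (C : Finset X) : degIn univ C = Fintype.card X := by
  have : (univ.filter fun C' => #(C ∆ C') = 1) = univ.image fun x => C ∆ {x} := by
    ext C'
    simp [card_symmDiff_eq_one_iff, eq_comm]
  rw [← card_univ (α := X),
    ← card_image_of_injective _ ((symmDiff_right_injective C).comp singleton_injective)]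
  exact congrArg card this

lemma NonClashing.exists_fst_mem_symmDiff {𝒞 : Finset (Finset X)}
    {T : Finset X → Finset (X × Bool)} (hT : IsTeacher 𝒞 T) (hNC : NonClashing 𝒞 T)
    {C C' : Finset X} (hC : C ∈ 𝒞) (hC' : C' ∈ 𝒞) (hne : C ≠ C') :
    (∃ p ∈ T C, p.1 ∈ C ∆ C') ∨ ∃ p ∈ T C', p.1 ∈ C ∆ C' := by
  by_contra! h
  refine hNC C hC C' hC' hne ⟨fun p hp => ?_, fun p hp => ?_⟩
  · have hp' := h.1 p hp
    rw [mem_symmDiff] at hp'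
    have := hT C hC p hp
    tauto
  · have hp' := h.2 p hp
    rw [mem_symmDiff] at hp'
    have := hT C' hC' p hp
    tauto

lemma sum_degIn_le_two_mul_sum_card {𝒞 : Finset (Finset X)}
    {T : Finset X → Finset (X × Bool)} (hT : IsTeacher 𝒞 T) (hNC : NonClashing 𝒞 T) :
    ∑ C ∈ 𝒞, degIn 𝒞 C ≤ 2 * ∑ C ∈ 𝒞, #(T C) := by
  classical
  -- `charged C C'`: the edge `C C'` is paid for by an example of `T C`.
  set charged : Finset X → Finset X → Prop := fun C C' =>
    #(C ∆ C') = 1 ∧ ∃ p ∈ T C, p.1 ∈ C ∆ C'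
  have hcharged (C : Finset X) : #(𝒞.filter (charged C)) ≤ #(T C) := by
    refine (card_le_card fun C' hC' => ?_).trans (card_image_le (f := fun p => C ∆ {p.1}))
    obtain ⟨-, hadj, p, hp, hpx⟩ := mem_filter.mp hC'
    obtain ⟨x, rfl⟩ := card_symmDiff_eq_one_iff.mp hadj
    rw [symmDiff_symmDiff_cancel_left, mem_singleton] at hpx
    exact mem_image.mpr ⟨p, hp, by rw [hpx]⟩
  have hdeg (C : Finset X) (hC : C ∈ 𝒞) :
      degIn 𝒞 C ≤ #(𝒞.filter (charged C)) + #(𝒞.filter fun C' => charged C' C) := by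
    refine le_trans (card_le_card fun C' hC' => ?_) (card_union_le _ _)
    obtain ⟨hC', hadj⟩ := mem_filter.mp hC'
    rw [← Finset.symmDiff_def] at hadj
    have hne : C ≠ C' := by rintro rfl; simp at hadj
    simp only [mem_union, mem_filter, hC', charged, symmDiff_comm C', hadj, true_and]
    exact hNC.exists_fst_mem_symmDiff hT hC hC' hne
  have hswap : ∑ C ∈ 𝒞, #(𝒞.filter fun C' => charged C' C) =
      ∑ C ∈ 𝒞, #(𝒞.filter (charged C)) := by
    simp only [card_filter]
    exact sum_comm
  calc ∑ C ∈ 𝒞, degIn 𝒞 C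
      ≤ ∑ C ∈ 𝒞, (#(𝒞.filter (charged C)) + #(𝒞.filter fun C' => charged C' C)) :=
        sum_le_sum hdeg
    _ = 2 * ∑ C ∈ 𝒞, #(𝒞.filter (charged C)) := by rw [sum_add_distrib, hswap, two_mul]
    _ ≤ 2 * ∑ C ∈ 𝒞, #(T C) := by gcongr with C; exact hcharged C

def pairExample (a b : X) (C : Finset X) : X × Bool :=
  (if (a ∈ C ↔ b ∈ C) then a else b, decide (b ∈ C))

lemma pairExample_fst_mem_iff (a b : X) (C : Finset X) :
    (pairExample a b C).1 ∈ C ↔ (pairExample a b C).2 = true := by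
  unfold pairExample
  split_ifs with h <;> simp [h]

lemma mem_iff_mem_of_pairExample {a b : X} {C C' : Finset X}
    (h : (pairExample a b C).1 ∈ C' ↔ (pairExample a b C).2 = true)
    (h' : (pairExample a b C').1 ∈ C ↔ (pairExample a b C').2 = true) :
    (a ∈ C ↔ a ∈ C') ∧ (b ∈ C ↔ b ∈ C') := by
  unfold pairExample at h h'
  by_cases a ∈ C <;> by_cases b ∈ C <;> by_cases a ∈ C' <;> by_cases b ∈ C' <;> simp_all

section PairTeacher

variable {ι : Type*} [Fintype ι] (a b : ι → X)

def pairTeacher (C : Finset X) : Finset (X × Bool) :=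
  univ.image fun i => pairExample (a i) (b i) C

lemma isTeacher_pairTeacher (𝒞 : Finset (Finset X)) : IsTeacher 𝒞 (pairTeacher a b) := by
  intro C _ p hp
  obtain ⟨i, -, rfl⟩ := mem_image.mp hp
  exact pairExample_fst_mem_iff _ _ C

lemma nonClashing_pairTeacher (hcover : ∀ x, ∃ i, x = a i ∨ x = b i) (𝒞 : Finset (Finset X)) :
    NonClashing 𝒞 (pairTeacher a b) := by
  rintro C - C' - hne ⟨h, h'⟩
  refine hne (ext fun x => ?_)
  obtain ⟨i, hi⟩ := hcover x
  have hagree := mem_iff_mem_of_pairExample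
    (h _ (mem_image_of_mem _ (mem_univ i))) (h' _ (mem_image_of_mem _ (mem_univ i)))
  rcases hi with rfl | rfl
  exacts [hagree.1, hagree.2]

lemma card_pairTeacher_le (C : Finset X) : #(pairTeacher a b C) ≤ Fintype.card ι :=
  card_image_le

end PairTeacher

/-- The pairs `{2i, 2i+1}` covering `Fin m`; for odd `m` the last one degenerates to `{m-1}`. -/
def finPairFst (m : ℕ) (i : Fin ((m + 1) / 2)) : Fin m := ⟨2 * i, by omega⟩

def finPairSnd (m : ℕ) (i : Fin ((m + 1) / 2)) : Fin m := ⟨min (2 * i + 1) (m - 1), by omega⟩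

lemma exists_eq_finPairFst_or_eq_finPairSnd {m : ℕ} (x : Fin m) :
    ∃ i, x = finPairFst m i ∨ x = finPairSnd m i := by
  refine ⟨⟨x / 2, by omega⟩, ?_⟩
  simp only [finPairFst, finPairSnd, Fin.ext_iff]
  omega

/-- `NCTD` of the powerset of an `m`-element domain is `⌈m/2⌉`. -/
theorem NCTD_powerset (m : ℕ) :
    NCTD (Finset.univ : Finset (Finset (Fin m))) = (m + 1) / 2 := by
  have hupper : (m + 1) / 2 ∈ {d | ∃ T : Finset (Fin m) → Finset (Fin m × Bool),
      IsTeacher univ T ∧ NonClashing univ T ∧ ∀ C ∈ univ, #(T C) ≤ d} := by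
    refine ⟨pairTeacher (finPairFst m) (finPairSnd m), isTeacher_pairTeacher _ _ _,
      nonClashing_pairTeacher _ _ exists_eq_finPairFst_or_eq_finPairSnd _, fun C _ => ?_⟩
    simpa using card_pairTeacher_le (finPairFst m) (finPairSnd m) C
  refine le_antisymm (Nat.sInf_le hupper) (le_csInf ⟨_, hupper⟩ ?_)
  rintro d ⟨T, hT, hNC, hd⟩
  have hdeg := sum_degIn_le_two_mul_sum_card hT hNC
  have hsize : ∑ C : Finset (Fin m), #(T C) ≤ ∑ _C : Finset (Fin m), d := sum_le_sum hd
  simp only [degIn_univ, Fintype.card_fin, sum_const, card_univ, Fintype.card_finset,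
    smul_eq_mul] at hdeg hsize
  have : m ≤ 2 * d := by
    refine Nat.le_of_mul_le_mul_left ?_ (pow_pos two_pos m)
    nlinarith
  omega
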